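/- For all reals x and z and all s > 0, S⁺(x, x+sz) + S⁻(x, x+sz) < F(x)(1−F(z)) + F(z)(1−F(x)) < 1, where S⁻(x,y) = S⁺(−x,−y). -/
import Mathlib

open MeasureTheory ProbabilityTheory

noncomputable def gaussE (u : ℝ) : ℝ := (Real.sqrt (2 * Real.pi))⁻¹ * Real.exp (-u ^ 2 / 2)

noncomputable def gaussF (u : ℝ) : ℝ := ∫ z in Set.Iic u, gaussE z

noncomputable def stdGauss2 : Measure (ℝ × ℝ) :=
  (gaussianReal 0 1).prod (gaussianReal 0 1)

/-- S⁺(x, y) = P(X₁ > x, X₁ + s Z₁ < y). -/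
noncomputable def Splus (s x y : ℝ) : ℝ :=
  (stdGauss2 {p : ℝ × ℝ | x < p.1 ∧ p.1 + s * p.2 < y}).toReal

/-- S⁻(x, y) = P(X₁ < x, X₁ + s Z₁ > y) = S⁺(-x, -y). -/
noncomputable def Sminus (s x y : ℝ) : ℝ :=
  (stdGauss2 {p : ℝ × ℝ | p.1 < x ∧ y < p.1 + s * p.2}).toReal

lemma gaussE_eq : gaussE = gaussianPDFReal 0 1 := by
  funext u; simp [gaussE, gaussianPDFReal]

lemma gaussF_eq (u : ℝ) : gaussF u = ((gaussianReal 0 1) (Set.Iic u)).toReal := by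
  rw [gaussianReal_apply_eq_integral 0 one_ne_zero, ENNReal.toReal_ofReal]
  · rw [gaussF, gaussE_eq]
  · exact integral_nonneg fun y => gaussianPDFReal_nonneg 0 1 y

lemma gaussian_pos {s : Set ℝ} (h : volume s ≠ 0) : 0 < gaussianReal 0 1 s := by
  rw [pos_iff_ne_zero]
  exact fun h0 => h (gaussianReal_absolutelyContinuous' 0 one_ne_zero h0)

instance : IsProbabilityMeasure stdGauss2 := by
  unfold stdGauss2; infer_instance

lemma gaussF_Ioi (u : ℝ) : ((gaussianReal 0 1) (Set.Ioi u)).toReal = 1 - gaussF u := by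
  have := measure_compl (μ := gaussianReal 0 1) (s := Set.Iic u) measurableSet_Iic
    (measure_ne_top _ _)
  rw [Set.compl_Iic] at this
  rw [this, measure_univ, gaussF_eq,
    ENNReal.toReal_sub_of_le (prob_le_one) (by simp)]
  simp

lemma key (a b : Set (ℝ × ℝ)) (ha : MeasurableSet a) (hab : a ⊆ b)
    (c : Set (ℝ × ℝ)) (_hc : MeasurableSet c) (hcb : c ⊆ b) (hdisj : Disjoint a c)
    (hcpos : 0 < stdGauss2 c) :
    (stdGauss2 a).toReal < (stdGauss2 b).toReal := by
  have h1 : stdGauss2 a < stdGauss2 b := by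
    calc stdGauss2 a < stdGauss2 a + stdGauss2 c :=
          ENNReal.lt_add_right (measure_ne_top _ _) hcpos.ne'
    _ = stdGauss2 (a ∪ c) := (measure_union' hdisj ha).symm
    _ ≤ stdGauss2 b := measure_mono (Set.union_subset hab hcb)
  exact ENNReal.toReal_lt_toReal (measure_ne_top _ _) (measure_ne_top _ _) |>.mpr h1

theorem stmt_7 (x z s : ℝ) (hs : 0 < s) :
    Splus s x (x + s * z) + Sminus s x (x + s * z) <
        gaussF x * (1 - gaussF z) + gaussF z * (1 - gaussF x) ∧
      gaussF x * (1 - gaussF z) + gaussF z * (1 - gaussF x) < 1 := by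
  set μ := gaussianReal 0 1 with hμ
  have hFx0 : 0 < gaussF x := by
    rw [gaussF_eq]
    exact ENNReal.toReal_pos (gaussian_pos (by simp)).ne' (measure_ne_top _ _)
  have hFz0 : 0 < gaussF z := by
    rw [gaussF_eq]
    exact ENNReal.toReal_pos (gaussian_pos (by simp)).ne' (measure_ne_top _ _)
  have hFx1 : gaussF x < 1 := by
    have := gaussF_Ioi x
    have h2 : 0 < ((gaussianReal 0 1) (Set.Ioi x)).toReal :=
      ENNReal.toReal_pos (gaussian_pos (by simp)).ne' (measure_ne_top _ _)
    linarith
  have hFz1 : gaussF z < 1 := by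
    have := gaussF_Ioi z
    have h2 : 0 < ((gaussianReal 0 1) (Set.Ioi z)).toReal :=
      ENNReal.toReal_pos (gaussian_pos (by simp)).ne' (measure_ne_top _ _)
    linarith
  constructor
  · -- Splus bound
    have hprodp : (stdGauss2 (Set.Ioi x ×ˢ Set.Iic z)).toReal = (1 - gaussF x) * gaussF z := by
      rw [stdGauss2, Measure.prod_prod, ENNReal.toReal_mul, gaussF_Ioi, ← gaussF_eq]
    have hprodm : (stdGauss2 (Set.Iic x ×ˢ Set.Ioi z)).toReal = gaussF x * (1 - gaussF z) := by
      rw [stdGauss2, Measure.prod_prod, ENNReal.toReal_mul, gaussF_Ioi, ← gaussF_eq]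
    have hp : Splus s x (x + s * z) < (1 - gaussF x) * gaussF z := by
      rw [Splus, ← hprodp]
      apply key
      · exact (measurableSet_lt measurable_const measurable_fst).inter
          (measurableSet_lt (measurable_fst.add (measurable_snd.const_mul s)) measurable_const)
      · rintro ⟨p1, p2⟩ ⟨h1, h2⟩
        simp only [Set.mem_prod, Set.mem_Ioi, Set.mem_Iic]
        refine ⟨h1, le_of_lt ?_⟩
        have : s * p2 < s * z := by nlinarith
        exact lt_of_mul_lt_mul_left this hs.le
      · exact (measurableSet_Ioi.prod measurableSet_Ioo :
          MeasurableSet (Set.Ioi (x + s) ×ˢ Set.Ioo (z - 1) z))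
      · rintro ⟨p1, p2⟩ ⟨h1, h2, h3⟩
        simp only [Set.mem_prod, Set.mem_Ioi, Set.mem_Iic, Set.mem_Ioo] at *
        exact ⟨by linarith, h3.le⟩
      · rw [Set.disjoint_left]
        rintro ⟨p1, p2⟩ hE hC
        simp only [Set.mem_setOf_eq, Set.mem_prod, Set.mem_Ioi, Set.mem_Ioo] at hE hC
        obtain ⟨h1, h2⟩ := hE
        obtain ⟨h3, h4, h5⟩ := hC
        nlinarith
      · rw [stdGauss2, Measure.prod_prod]
        exact ENNReal.mul_pos (gaussian_pos (by simp)).ne'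
          (gaussian_pos (by simp [Real.volume_Ioo])).ne'
    have hm : Sminus s x (x + s * z) < gaussF x * (1 - gaussF z) := by
      rw [Sminus, ← hprodm]
      apply key
      · exact (measurableSet_lt measurable_fst measurable_const).inter
          (measurableSet_lt measurable_const (measurable_fst.add (measurable_snd.const_mul s)))
      · rintro ⟨p1, p2⟩ ⟨h1, h2⟩
        simp only [Set.mem_prod, Set.mem_Iic, Set.mem_Ioi]
        refine ⟨h1.le, ?_⟩
        have : s * z < s * p2 := by nlinarith
        exact lt_of_mul_lt_mul_left this hs.le
      · exact (measurableSet_Iio.prod measurableSet_Ioo :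
          MeasurableSet (Set.Iio (x - s) ×ˢ Set.Ioo z (z + 1)))
      · rintro ⟨p1, p2⟩ ⟨h1, h2, h3⟩
        simp only [Set.mem_prod, Set.mem_Iio, Set.mem_Iic, Set.mem_Ioi, Set.mem_Ioo] at *
        exact ⟨by linarith, h2⟩
      · rw [Set.disjoint_left]
        rintro ⟨p1, p2⟩ hE hC
        simp only [Set.mem_setOf_eq, Set.mem_prod, Set.mem_Iio, Set.mem_Ioo] at hE hC
        obtain ⟨h1, h2⟩ := hE
        obtain ⟨h3, h4, h5⟩ := hC
        nlinarith
      · rw [stdGauss2, Measure.prod_prod]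
        exact ENNReal.mul_pos (gaussian_pos (by simp)).ne'
          (gaussian_pos (by simp [Real.volume_Ioo])).ne'
    nlinarith
  · nlinarith
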